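/- Let k be a field and Q a finite quiver without oriented cycles. Let S = k[x_a : a ∈ Q₁] be the polynomial ring with one variable for each arrow, and let φ : (kQ)_{>0} → S be the injective linear map sending the path a_n a_{n−1} ⋯ a_1 to the monomial x_{a_1} x_{a_2} ⋯ x_{a_n}. Then for every two-sided ideal I of kQ contained in (kQ)_{≥2}, one has I = φ^{-1}(J), where J is the ideal of S generated by φ(I). In particular, if I₁ and I₂ are two-sided ideals of kQ contained in (kQ)_{≥2} such that the ideals of S generated by φ(I₁) and by φ(I₂) coincide, then I₁ = I₂; that is, the ideal of relations I is determined by the associated homogeneous ideal J of S. -/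

import Mathlib

/-- A finite quiver on a vertex set `V`: a family of finite types of arrows `Arrow i j`
from `i` to `j`. -/
structure FinQuiver (V : Type) where
  Arrow : V → V → Type
  [fintypeArrow : ∀ i j, Fintype (Arrow i j)]

attribute [instance] FinQuiver.fintypeArrow

/-- Paths in a finite quiver: `QPath Q i j` is the type of paths from `i` to `j`. -/
inductive QPath {V : Type} (Q : FinQuiver V) : V → V → Type
  | nil (i : V) : QPath Q i i
  | cons {i j l : V} (p : QPath Q i j) (a : Q.Arrow j l) : QPath Q i l

namespace QPath

variable {V : Type} {Q : FinQuiver V}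

/-- The length (number of arrows) of a path. -/
def length : ∀ {i j : V}, QPath Q i j → ℕ
  | _, _, nil _ => 0
  | _, _, cons p _ => length p + 1

/-- Concatenation of paths. -/
def comp : ∀ {i j l : V}, QPath Q i j → QPath Q j l → QPath Q i l
  | _, _, _, p, nil _ => p
  | _, _, _, p, cons q a => cons (comp p q) a

/-- Transport a path along equalities of its endpoints. -/
def cast {i j i' j' : V} (hi : i = i') (hj : j = j') (p : QPath Q i j) : QPath Q i' j' := by
  subst hi; subst hj; exact p

end QPath

/-- The quiver `Q` has no oriented cycles: every path from a vertex to itself has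
length zero. -/
def FinQuiver.NoCycles {V : Type} (Q : FinQuiver V) : Prop :=
  ∀ (i : V) (p : QPath Q i i), p.length = 0

/-- A realization of the `k`-algebra `A` as the path algebra of the quiver `Q`:
a `k`-basis indexed by the paths of `Q`, such that basis vectors multiply by
concatenation of composable paths (and give `0` for non-composable paths), and such
that the sum of the length-zero paths is `1`.  The basis vector of a path lying in
`e_i (kQ) e_j` is indexed by the corresponding path from `j` to `i`. -/
structure PathAlgStructure (k : Type) [CommRing k] {V : Type} [Fintype V] [DecidableEq V]
    (Q : FinQuiver V) (A : Type) [Ring A] [Algebra k A] where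
  basis : Module.Basis (Σ i : V, Σ j : V, QPath Q i j) k A
  basis_mul : ∀ {a b c d : V} (p : QPath Q a b) (q : QPath Q c d),
    basis ⟨c, d, q⟩ * basis ⟨a, b, p⟩ =
      if h : b = c then basis ⟨a, d, p.comp (q.cast h.symm rfl)⟩ else 0
  one_def : (1 : A) = ∑ i : V, basis ⟨i, i, QPath.nil i⟩

namespace PathAlgStructure

variable {k : Type} [CommRing k] {V : Type} [Fintype V] [DecidableEq V]
  {Q : FinQuiver V} {A : Type} [Ring A] [Algebra k A]

/-- The idempotent `e_i` of the path algebra: the length-zero path at the vertex `i`. -/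
noncomputable def idem (ps : PathAlgStructure k Q A) (i : V) : A :=
  ps.basis ⟨i, i, QPath.nil i⟩

/-- `(kQ)_{≥ n}`: the span of the paths of length at least `n`. -/
def degreeGE (ps : PathAlgStructure k Q A) (n : ℕ) : Submodule k A :=
  Submodule.span k {x | ∃ (i j : V) (p : QPath Q i j), n ≤ p.length ∧ x = ps.basis ⟨i, j, p⟩}

/-- `e_i (kQ) e_j`: the span of the paths from `j` to `i`. -/
def pathSpan (ps : PathAlgStructure k Q A) (i j : V) : Submodule k A :=
  Submodule.span k {x | ∃ p : QPath Q j i, x = ps.basis ⟨j, i, p⟩}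

/-- `V_{ij}^{prim}`: the span of the arrows from `j` to `i`. -/
def arrowSpan (ps : PathAlgStructure k Q A) (i j : V) : Submodule k A :=
  Submodule.span k {x | ∃ a : Q.Arrow j i, x = ps.basis ⟨j, i, (QPath.nil j).cons a⟩}

/-- `V_{ij}^{nonprim} = e_i (kQ)_{≥2} e_j`: the span of the paths from `j` to `i`
of length at least two. -/
def nonprimSpan (ps : PathAlgStructure k Q A) (i j : V) : Submodule k A :=
  Submodule.span k {x | ∃ p : QPath Q j i, 2 ≤ p.length ∧ x = ps.basis ⟨j, i, p⟩}

end PathAlgStructure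

/-- The multiset (finitely supported function) of arrows occurring in a path. -/
noncomputable def arrowCount {V : Type} {Q : FinQuiver V} :
    ∀ {i j : V}, QPath Q i j → ((Σ i : V, Σ j : V, Q.Arrow i j) →₀ ℕ)
  | _, _, QPath.nil _ => 0
  | _, _, QPath.cons p a => arrowCount p + Finsupp.single ⟨_, _, a⟩ 1

/-- The `k`-linear map `φ : kQ → k[x_a : a ∈ Q₁]` sending the basis vector of a path
`p = a_n ⋯ a_1` to the monomial `x_{a_1} ⋯ x_{a_n}`. -/
noncomputable def phiMap {k : Type} [CommRing k] {V : Type} [Fintype V] [DecidableEq V]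
    {Q : FinQuiver V} {A : Type} [Ring A] [Algebra k A] (ps : PathAlgStructure k Q A) :
    A →ₗ[k] MvPolynomial (Σ i : V, Σ j : V, Q.Arrow i j) k :=
  ps.basis.constr ℕ fun x => MvPolynomial.monomial (arrowCount x.2.2) (1 : k)

/-! When `Q` has no oriented cycles, a path of positive length is determined by the multiset
of its arrows, so `φ` has a linear left inverse `φ⁻¹` on `(kQ)_{>0}` sending a monomial to the
path with those arrows, or to `0`. Over `k`, `J` is spanned by the products `x^d φ(y)` with
`y ∈ I`. Splitting `y = ∑ e_i y e_j`, one finds `φ⁻¹(x^d φ(e_i y e_j)) = c (e_i y e_j) b` for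
paths `b`, `c` whose arrows make up `d`, or `0` if there are none: a path whose arrows contain
those of a path `p` contains `p` as a subpath. Hence `φ⁻¹(J) ⊆ I`, and `φ x ∈ J` gives
`x = φ⁻¹(φ x) ∈ I` for `x ∈ (kQ)_{>0}`. -/

namespace QPath

variable {V : Type} {Q : FinQuiver V}

lemma length_comp {i j l : V} (p : QPath Q i j) (q : QPath Q j l) :
    (p.comp q).length = p.length + q.length := by
  induction q with
  | nil => simp [comp, length]
  | cons q a ih => simp only [comp, length, ih, Nat.add_assoc]

lemma nil_comp {i j : V} (q : QPath Q i j) : (nil i).comp q = q := by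
  induction q with
  | nil => simp [comp]
  | cons q a ih => rw [comp, ih]

lemma eq_of_length_eq_zero {i j : V} (p : QPath Q i j) (h : p.length = 0) : i = j := by
  cases p with
  | nil => rfl
  | cons p a => simp [length] at h

end QPath

section ArrowCount

variable {V : Type} {Q : FinQuiver V}

lemma arrowCount_comp {i j l : V} (p : QPath Q i j) (q : QPath Q j l) :
    arrowCount (p.comp q) = arrowCount p + arrowCount q := by
  induction q with
  | nil => simp [QPath.comp, arrowCount]
  | cons q a ih => simp only [QPath.comp, arrowCount, ih, add_assoc]

lemma arrowCount_cons_apply_self {i j l : V} (p : QPath Q i j) (a : Q.Arrow j l) :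
    arrowCount (p.cons a) ⟨j, l, a⟩ ≠ 0 := by
  simp [arrowCount]

lemma exists_arrowCount_eq_add_single_add {u v x y : V} (r : QPath Q u v) (a : Q.Arrow x y)
    (h : arrowCount r ⟨x, y, a⟩ ≠ 0) :
    ∃ (b : QPath Q u x) (c : QPath Q y v),
      arrowCount r = arrowCount b + Finsupp.single ⟨x, y, a⟩ 1 + arrowCount c := by
  induction r with
  | nil => simp [arrowCount] at h
  | cons r e ih =>
    by_cases he : (⟨_, _, e⟩ : Σ i j, Q.Arrow i j) = ⟨x, y, a⟩
    · cases he
      exact ⟨r, .nil _, by simp [arrowCount]⟩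
    · obtain ⟨b, c, hc⟩ := ih (by simpa [arrowCount, Finsupp.single_apply, he] using h)
      exact ⟨b, c.cons e, by simp only [arrowCount, hc, add_assoc]⟩

end ArrowCount

namespace FinQuiver.NoCycles

variable {V : Type} {Q : FinQuiver V}

lemma isEmpty_qpath (hQ : Q.NoCycles) {x y : V} (a : Q.Arrow x y) : IsEmpty (QPath Q y x) :=
  ⟨fun p => by simpa [QPath.length] using hQ y (p.cons a)⟩

lemma arrowCount_eq_zero (hQ : Q.NoCycles) {i : V} (p : QPath Q i i) : arrowCount p = 0 := by
  cases p with
  | nil => simp [arrowCount]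
  | cons p a => exact (hQ.isEmpty_qpath a).elim p

lemma target_eq_of_arrowCount_eq (hQ : Q.NoCycles) {i j i' j' : V} (p : QPath Q i j)
    (q : QPath Q i' j') (h : arrowCount p = arrowCount q) (hp : p.length ≠ 0) : j = j' := by
  cases p with
  | nil => simp [QPath.length] at hp
  | cons p a =>
    cases q with
    | nil => exact absurd (h ▸ arrowCount_cons_apply_self p a) (by simp [arrowCount])
    | cons q b =>
      obtain ⟨-, T, -⟩ :=
        exists_arrowCount_eq_add_single_add _ a (h ▸ arrowCount_cons_apply_self p a)
      obtain ⟨-, U, -⟩ :=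
        exists_arrowCount_eq_add_single_add _ b (h ▸ arrowCount_cons_apply_self q b)
      have := hQ _ (T.comp U)
      rw [QPath.length_comp] at this
      exact T.eq_of_length_eq_zero (by omega)

lemma eq_of_arrowCount_eq (hQ : Q.NoCycles) {i i' j : V} (p : QPath Q i j) (q : QPath Q i' j)
    (h : arrowCount p = arrowCount q) : (⟨i, p⟩ : Σ i, QPath Q i j) = ⟨i', q⟩ := by
  induction p generalizing i' with
  | nil =>
    cases q with
    | nil => rfl
    | cons q b => exact absurd (h ▸ arrowCount_cons_apply_self q b) (by simp [arrowCount])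
  | cons p a ih =>
    cases q with
    | nil => exact absurd (h ▸ arrowCount_cons_apply_self p a) (by simp [arrowCount])
    | cons q b =>
      by_cases hab : (⟨_, _, b⟩ : Σ i j, Q.Arrow i j) = ⟨_, _, a⟩
      · cases hab
        obtain ⟨⟩ := ih q (by simpa [arrowCount] using h)
        rfl
      · have hb : arrowCount p ⟨_, _, b⟩ ≠ 0 := by
          have := DFunLike.congr_fun h ⟨_, _, b⟩
          simp [arrowCount, hab] at this
          omega
        obtain ⟨-, U, -⟩ := exists_arrowCount_eq_add_single_add p b hb
        exact (hQ.isEmpty_qpath a).elim U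

lemma sigma_eq_of_arrowCount_eq (hQ : Q.NoCycles) {i j i' j' : V} (p : QPath Q i j)
    (q : QPath Q i' j') (h : arrowCount p = arrowCount q) (hp : p.length ≠ 0) :
    (⟨i, j, p⟩ : Σ i j, QPath Q i j) = ⟨i', j', q⟩ := by
  obtain rfl := hQ.target_eq_of_arrowCount_eq p q h hp
  obtain ⟨⟩ := hQ.eq_of_arrowCount_eq p q h
  rfl

lemma exists_arrowCount_add_eq_of_arrowCount_eq_add (hQ : Q.NoCycles) {j i u v : V}
    (p : QPath Q j i) (hp : p.length ≠ 0) (r : QPath Q u v) (d : (Σ x y, Q.Arrow x y) →₀ ℕ)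
    (h : arrowCount r = arrowCount p + d) :
    ∃ (b : QPath Q u j) (c : QPath Q i v), arrowCount b + arrowCount c = d := by
  induction p generalizing d with
  | nil => simp [QPath.length] at hp
  | @cons m _ p a ih =>
    by_cases hp' : p.length = 0
    · obtain rfl := p.eq_of_length_eq_zero hp'
      obtain ⟨b, c, hbc⟩ := exists_arrowCount_eq_add_single_add r a (by
        simp [h, arrowCount])
      have hsplit := hbc.symm.trans h
      simp only [arrowCount, hQ.arrowCount_eq_zero p, zero_add] at hsplit
      exact ⟨b, c, add_left_cancel (a := Finsupp.single _ 1) (by rw [← hsplit]; abel)⟩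
    · obtain ⟨b, c, hbc⟩ := ih hp' (Finsupp.single ⟨_, _, a⟩ 1 + d) (by
        rw [h, arrowCount, add_assoc])
      have hmem : arrowCount b ⟨_, _, a⟩ + arrowCount c ⟨_, _, a⟩ ≠ 0 := by
        have := DFunLike.congr_fun hbc ⟨_, _, a⟩
        simp only [Finsupp.add_apply, Finsupp.single_eq_same] at this
        omega
      by_cases hc : arrowCount c ⟨_, _, a⟩ = 0
      · obtain ⟨-, b₂, -⟩ := exists_arrowCount_eq_add_single_add b a (by omega)
        exact (hQ.isEmpty_qpath a).elim (b₂.comp p)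
      · obtain ⟨c₁, c₂, hc₁₂⟩ := exists_arrowCount_eq_add_single_add c a hc
        rw [hc₁₂, hQ.arrowCount_eq_zero c₁, zero_add] at hbc
        exact ⟨b, c₂, add_left_cancel (a := Finsupp.single _ 1) (by rw [← hbc]; abel)⟩

end FinQuiver.NoCycles

namespace PathAlgStructure

variable {k : Type} [CommRing k] {V : Type} [Fintype V] [DecidableEq V]
  {Q : FinQuiver V} {A : Type} [Ring A] [Algebra k A] (ps : PathAlgStructure k Q A)

lemma basis_mul_basis {a b d : V} (p : QPath Q a b) (q : QPath Q b d) :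
    ps.basis ⟨b, d, q⟩ * ps.basis ⟨a, b, p⟩ = ps.basis ⟨a, d, p.comp q⟩ := by
  rw [ps.basis_mul, dif_pos rfl]
  rfl

lemma idem_mul_basis_mul_idem (i j : V) {a b : V} (p : QPath Q a b) :
    ps.idem i * ps.basis ⟨a, b, p⟩ * ps.idem j =
      if b = i ∧ a = j then ps.basis ⟨a, b, p⟩ else 0 := by
  unfold idem
  by_cases hb : b = i
  · subst hb
    rw [basis_mul_basis, ps.basis_mul]
    by_cases ha : a = j
    · subst ha
      simp [QPath.cast, QPath.nil_comp, QPath.comp]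
    · simp [ha, Ne.symm ha]
  · simp [ps.basis_mul, hb]

lemma degreeGE_antitone : Antitone ps.degreeGE := fun _ _ hmn =>
  Submodule.span_mono <| by
    rintro _ ⟨i, j, p, hp, rfl⟩
    exact ⟨i, j, p, hmn.trans hp, rfl⟩

lemma idem_mul_mul_idem_mem_nonprimSpan {y : A} (hy : y ∈ ps.degreeGE 2) (i j : V) :
    ps.idem i * y * ps.idem j ∈ ps.nonprimSpan i j := by
  suffices ps.degreeGE 2 ≤
      (ps.nonprimSpan i j).comap (LinearMap.mulLeftRight k (ps.idem i, ps.idem j)) from this hy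
  refine Submodule.span_le.mpr ?_
  rintro _ ⟨a, b, p, hp, rfl⟩
  simp only [SetLike.mem_coe, Submodule.mem_comap, LinearMap.mulLeftRight_apply,
    idem_mul_basis_mul_idem]
  split_ifs with h
  · obtain ⟨rfl, rfl⟩ := h
    exact Submodule.subset_span ⟨p, hp, rfl⟩
  · exact zero_mem _

lemma sum_idem_mul_mul_idem (y : A) : ∑ i, ∑ j, ps.idem i * y * ps.idem j = y := by
  simp_rw [← Finset.mul_sum, ← Finset.sum_mul, idem, ← ps.one_def, one_mul, mul_one]

open MvPolynomial

lemma phiMap_basis (s : Σ i j, QPath Q i j) :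
    phiMap ps (ps.basis s) = monomial (arrowCount s.2.2) 1 :=
  ps.basis.constr_basis ℕ _ s

noncomputable def phiInv (ps : PathAlgStructure k Q A) :
    MvPolynomial (Σ i j, Q.Arrow i j) k →ₗ[k] A :=
  open Classical in
  (basisMonomials _ k).constr k fun d =>
    if h : ∃ s : Σ i j, QPath Q i j, s.2.2.length ≠ 0 ∧ arrowCount s.2.2 = d then
      ps.basis h.choose else 0

lemma phiInv_monomial (d : (Σ i j, Q.Arrow i j) →₀ ℕ) :
    ps.phiInv (monomial d 1) = open Classical in
      if h : ∃ s : Σ i j, QPath Q i j, s.2.2.length ≠ 0 ∧ arrowCount s.2.2 = d then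
        ps.basis h.choose else 0 :=
  (basisMonomials _ k).constr_basis k _ d

lemma phiInv_monomial_arrowCount (hQ : Q.NoCycles) (s : Σ i j, QPath Q i j)
    (hs : s.2.2.length ≠ 0) : ps.phiInv (monomial (arrowCount s.2.2) 1) = ps.basis s := by
  have h : ∃ t : Σ i j, QPath Q i j, t.2.2.length ≠ 0 ∧ arrowCount t.2.2 = arrowCount s.2.2 :=
    ⟨s, hs, rfl⟩
  rw [phiInv_monomial, dif_pos h]
  obtain ⟨ht, hts⟩ := h.choose_spec
  exact congrArg ps.basis (hQ.sigma_eq_of_arrowCount_eq _ _ hts ht)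

lemma phiInv_monomial_eq_zero {d : (Σ i j, Q.Arrow i j) →₀ ℕ}
    (hd : ∀ s : Σ i j, QPath Q i j, s.2.2.length ≠ 0 → arrowCount s.2.2 ≠ d) :
    ps.phiInv (monomial d 1) = 0 := by
  rw [phiInv_monomial, dif_neg fun ⟨s, hs, hsd⟩ => hd s hs hsd]

lemma phiInv_phiMap (hQ : Q.NoCycles) {x : A} (hx : x ∈ ps.degreeGE 1) :
    ps.phiInv (phiMap ps x) = x := by
  refine LinearMap.eqOn_span' (f := ps.phiInv ∘ₗ phiMap ps) (g := LinearMap.id) ?_ hx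
  rintro _ ⟨i, j, p, hp, rfl⟩
  simpa [phiMap_basis] using
    ps.phiInv_monomial_arrowCount hQ ⟨i, j, p⟩ (Nat.one_le_iff_ne_zero.mp hp)

lemma exists_phiInv_monomial_mul_phiMap (hQ : Q.NoCycles) (i j : V)
    (d : (Σ x y, Q.Arrow x y) →₀ ℕ) :
    ∃ a a' : A, ∀ y ∈ ps.nonprimSpan i j,
      ps.phiInv (monomial d 1 * phiMap ps y) = a * y * a' := by
  by_cases hd :
      ∃ (u v : V) (b : QPath Q u j) (c : QPath Q i v), arrowCount b + arrowCount c = d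
  · obtain ⟨u, v, b, c, rfl⟩ := hd
    refine ⟨ps.basis ⟨i, v, c⟩, ps.basis ⟨u, j, b⟩, fun y hy => ?_⟩
    refine LinearMap.eqOn_span'
      (f := ps.phiInv ∘ₗ LinearMap.mulLeft k (monomial (arrowCount b + arrowCount c) 1) ∘ₗ
        phiMap ps)
      (g := LinearMap.mulLeftRight k (ps.basis ⟨i, v, c⟩, ps.basis ⟨u, j, b⟩)) ?_ hy
    rintro _ ⟨p, hp, rfl⟩
    have hlen : (b.comp (p.comp c)).length ≠ 0 := by
      simp only [QPath.length_comp]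
      omega
    simp only [LinearMap.comp_apply, LinearMap.mulLeft_apply, LinearMap.mulLeftRight_apply,
      phiMap_basis, monomial_mul, one_mul, basis_mul_basis]
    rw [← ps.phiInv_monomial_arrowCount hQ ⟨u, v, _⟩ hlen]
    simp only [arrowCount_comp]
    abel_nf
  · refine ⟨0, 0, fun y hy => ?_⟩
    rw [mul_zero]
    refine LinearMap.eqOn_span'
      (f := ps.phiInv ∘ₗ LinearMap.mulLeft k (monomial d 1) ∘ₗ phiMap ps) (g := 0) ?_ hy
    rintro _ ⟨p, hp, rfl⟩
    simp only [LinearMap.comp_apply, LinearMap.mulLeft_apply, LinearMap.zero_apply,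
      phiMap_basis, monomial_mul, one_mul]
    refine ps.phiInv_monomial_eq_zero fun ⟨u, v, r⟩ _ hr => hd ?_
    obtain ⟨b, c, hbc⟩ :=
      hQ.exists_arrowCount_add_eq_of_arrowCount_eq_add p (by omega) r d (by rw [hr, add_comm])
    exact ⟨u, v, b, c, hbc⟩

lemma phiInv_monomial_mul_phiMap_mem (hQ : Q.NoCycles) {I : Submodule k A}
    (hI : ∀ a : A, ∀ x ∈ I, a * x ∈ I ∧ x * a ∈ I) (hI2 : I ≤ ps.degreeGE 2)
    (d : (Σ x y, Q.Arrow x y) →₀ ℕ) {y : A} (hy : y ∈ I) :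
    ps.phiInv (monomial d 1 * phiMap ps y) ∈ I := by
  choose a a' ha using fun i j => ps.exists_phiInv_monomial_mul_phiMap hQ i j d
  have hyij (i j : V) : ps.idem i * y * ps.idem j ∈ I := (hI _ _ (hI _ _ hy).1).2
  rw [← ps.sum_idem_mul_mul_idem y]
  simp only [map_sum, Finset.mul_sum]
  refine Submodule.sum_mem _ fun i _ => Submodule.sum_mem _ fun j _ => ?_
  rw [ha i j _ (ps.idem_mul_mul_idem_mem_nonprimSpan (hI2 hy) i j)]
  exact (hI _ _ (hI _ _ (hyij i j)).1).2

lemma phiInv_mem_of_mem_ideal_span (hQ : Q.NoCycles) {I : Submodule k A}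
    (hI : ∀ a : A, ∀ x ∈ I, a * x ∈ I ∧ x * a ∈ I) (hI2 : I ≤ ps.degreeGE 2)
    {g : MvPolynomial (Σ i j, Q.Arrow i j) k} (hg : g ∈ Ideal.span (phiMap ps '' I)) :
    ps.phiInv g ∈ I := by
  have hspan := (basisMonomials (Σ i j, Q.Arrow i j) k).span_eq
  rw [coe_basisMonomials] at hspan
  rw [← Submodule.restrictScalars_mem k, Ideal.span, ← Submodule.span_smul_of_span_eq_top hspan]
    at hg
  refine (Submodule.span_le (p := I.comap ps.phiInv)).mpr ?_ hg
  rintro _ ⟨_, ⟨d, rfl⟩, _, ⟨y, hy, rfl⟩, rfl⟩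
  exact ps.phiInv_monomial_mul_phiMap_mem hQ hI hI2 d hy

lemma phiMap_mem_ideal_span_iff (hQ : Q.NoCycles) {I : Submodule k A}
    (hI : ∀ a : A, ∀ x ∈ I, a * x ∈ I ∧ x * a ∈ I) (hI2 : I ≤ ps.degreeGE 2) {x : A}
    (hx : x ∈ ps.degreeGE 1) : phiMap ps x ∈ Ideal.span (phiMap ps '' I) ↔ x ∈ I :=
  ⟨fun hJ => ps.phiInv_phiMap hQ hx ▸ ps.phiInv_mem_of_mem_ideal_span hQ hI hI2 hJ,
    fun hxI => Ideal.subset_span ⟨x, hxI, rfl⟩⟩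

lemma le_of_ideal_span_phiMap_le (hQ : Q.NoCycles) {I₁ I₂ : Submodule k A}
    (hI₁2 : I₁ ≤ ps.degreeGE 2) (hI₂ : ∀ a : A, ∀ x ∈ I₂, a * x ∈ I₂ ∧ x * a ∈ I₂)
    (hI₂2 : I₂ ≤ ps.degreeGE 2)
    (h : Ideal.span (phiMap ps '' I₁) ≤ Ideal.span (phiMap ps '' I₂)) :
    I₁ ≤ I₂ := fun x hx =>
  (ps.phiMap_mem_ideal_span_iff hQ hI₂ hI₂2 (ps.degreeGE_antitone one_le_two (hI₁2 hx))).mp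
    (h (Ideal.subset_span ⟨x, hx, rfl⟩))

end PathAlgStructure

/-- For a finite quiver `Q` without oriented cycles, every two-sided ideal
`I ⊆ (kQ)_{≥2}` of the path algebra satisfies `I = φ⁻¹(J)`, where
`J = (φ(I)) ⊆ S = k[x_a : a ∈ Q₁]` is the ideal generated by the image of `I` under the
injective linear map `φ : (kQ)_{>0} → S` sending a path to the product of the variables of
its arrows.  In particular, the ideal of relations `I` is determined by `J`. -/
theorem ideal_determined_by_polynomial_ideal (k : Type) [Field k] (V : Type) [Fintype V]
    [DecidableEq V] (Q : FinQuiver V) (A : Type) [Ring A] [Algebra k A]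
    (ps : PathAlgStructure k Q A) (hQ : Q.NoCycles) :
    (∀ I : Submodule k A, (∀ a : A, ∀ x ∈ I, a * x ∈ I ∧ x * a ∈ I) → I ≤ ps.degreeGE 2 →
      ∀ x ∈ ps.degreeGE 1,
        (phiMap ps x ∈ Ideal.span (phiMap ps '' (I : Set A)) ↔ x ∈ I)) ∧
    (∀ I₁ I₂ : Submodule k A,
      (∀ a : A, ∀ x ∈ I₁, a * x ∈ I₁ ∧ x * a ∈ I₁) → I₁ ≤ ps.degreeGE 2 →
      (∀ a : A, ∀ x ∈ I₂, a * x ∈ I₂ ∧ x * a ∈ I₂) → I₂ ≤ ps.degreeGE 2 →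
      Ideal.span (phiMap ps '' (I₁ : Set A)) = Ideal.span (phiMap ps '' (I₂ : Set A)) →
      I₁ = I₂) :=
  ⟨fun _ hI hI2 _ hx => ps.phiMap_mem_ideal_span_iff hQ hI hI2 hx,
    fun _ _ hI₁ hI₁2 hI₂ hI₂2 hJ =>
      (ps.le_of_ideal_span_phiMap_le hQ hI₁2 hI₂ hI₂2 hJ.le).antisymm
        (ps.le_of_ideal_span_phiMap_le hQ hI₂2 hI₁ hI₁2 hJ.ge)⟩
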